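/- arXiv:2005.05536 — 3 statements merged into one kernel-verified Lean document; each statement's English description precedes it below -/
import Mathlib

section
/- Let Λ be an artin algebra and C an ICE-closed subcategory of mod Λ. Then W(C) = {W ∈ C : for every morphism φ : C' → W with C' ∈ C, ker φ ∈ C} is a wide subcategory of mod Λ, i.e. it is closed under kernels, cokernels and extensions. -/
open CategoryTheory CategoryTheory.Limits

universe u

namespace Paper

/-- The category of (right) `Λ`-modules, realized as left modules over `Λᵐᵒᵖ`. -/
abbrev Modcat (Λ : Type u) [Ring Λ] := ModuleCat.{u} Λᵐᵒᵖ

variable {Λ : Type u} [Ring Λ]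

/-- The regular right `Λ`-module `Λ_Λ`. -/
noncomputable abbrev regular (Λ : Type u) [Ring Λ] : Modcat Λ := ModuleCat.of Λᵐᵒᵖ Λᵐᵒᵖ

/-- `M` is a direct summand of `N`. -/
def IsSummand (M N : Modcat Λ) : Prop := ∃ (i : M ⟶ N) (r : N ⟶ M), i ≫ r = 𝟙 M

/-- The `n`-th power (finite direct sum of copies) of a module. -/
noncomputable def pow (U : Modcat Λ) (n : ℕ) : Modcat Λ := ModuleCat.of Λᵐᵒᵖ (Fin n → U)

/-- `add U`: direct summands of finite direct sums of copies of `U`. -/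
def addOf (U : Modcat Λ) : Set (Modcat Λ) := { X | ∃ n : ℕ, IsSummand X (pow U n) }

/-- `Fac U`: quotients of objects of `add U`. -/
def facOf (U : Modcat Λ) : Set (Modcat Λ) :=
  { X | ∃ M ∈ addOf U, ∃ f : M ⟶ X, Epi f }

/-- `Sub U`: submodules of objects of `add U`. -/
def subOf (U : Modcat Λ) : Set (Modcat Λ) :=
  { X | ∃ M ∈ addOf U, ∃ f : X ⟶ M, Mono f }

/-- `cok U`: cokernels of maps between objects of `add U`. -/
def cokOf (U : Modcat Λ) : Set (Modcat Λ) :=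
  { X | ∃ (M N : Modcat Λ) (_ : M ∈ addOf U) (_ : N ∈ addOf U) (f : M ⟶ N),
      Nonempty (X ≅ cokernel f) }

/-- `Fac C` for a collection `C`: all quotients of objects of `C`. -/
def Fac (C : Set (Modcat Λ)) : Set (Modcat Λ) :=
  { X | ∃ M ∈ C, ∃ f : M ⟶ X, Epi f }

/-- `0 → X → Y → Z → 0` is a short exact sequence. -/
def IsSES {X Y Z : Modcat Λ} (f : X ⟶ Y) (g : Y ⟶ Z) : Prop :=
  ∃ h : f ≫ g = 0, (ShortComplex.mk f g h).ShortExact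

/-- A subcategory of `mod Λ`: a class of finitely generated modules closed under
isomorphisms, finite direct sums and direct summands. -/
structure IsSubcat (C : Set (Modcat Λ)) : Prop where
  fg : ∀ M ∈ C, Module.Finite Λᵐᵒᵖ M
  isoClosed : ∀ {M N : Modcat Λ}, (M ≅ N) → M ∈ C → N ∈ C
  sumClosed : ∀ {M N : Modcat Λ}, M ∈ C → N ∈ C → (M ⊞ N) ∈ C
  summandClosed : ∀ {M N : Modcat Λ}, IsSummand M N → N ∈ C → M ∈ C

def ClosedUnderExtensions (C : Set (Modcat Λ)) : Prop :=
  ∀ ⦃X Y Z : Modcat Λ⦄ (f : X ⟶ Y) (g : Y ⟶ Z), IsSES f g → X ∈ C → Z ∈ C → Y ∈ C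

def ClosedUnderQuotients (C : Set (Modcat Λ)) : Prop :=
  ∀ ⦃M N : Modcat Λ⦄ (f : M ⟶ N), Epi f → M ∈ C → N ∈ C

def ClosedUnderCokernels (C : Set (Modcat Λ)) : Prop :=
  ∀ ⦃M N : Modcat Λ⦄ (f : M ⟶ N), M ∈ C → N ∈ C → cokernel f ∈ C

def ClosedUnderImages (C : Set (Modcat Λ)) : Prop :=
  ∀ ⦃M N : Modcat Λ⦄ (f : M ⟶ N), M ∈ C → N ∈ C → image f ∈ C

def ClosedUnderKernels (C : Set (Modcat Λ)) : Prop :=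
  ∀ ⦃M N : Modcat Λ⦄ (f : M ⟶ N), M ∈ C → N ∈ C → kernel f ∈ C

def ClosedUnderEpiKernels (C : Set (Modcat Λ)) : Prop :=
  ∀ ⦃X Y Z : Modcat Λ⦄ (f : X ⟶ Y) (g : Y ⟶ Z), IsSES f g → Y ∈ C → Z ∈ C → X ∈ C

/-- ICE-closed: closed under images, cokernels and extensions. -/
def ICEClosed (C : Set (Modcat Λ)) : Prop :=
  ClosedUnderImages C ∧ ClosedUnderCokernels C ∧ ClosedUnderExtensions C

/-- CE-closed: closed under cokernels and extensions. -/
def CEClosed (C : Set (Modcat Λ)) : Prop :=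
  ClosedUnderCokernels C ∧ ClosedUnderExtensions C

/-- Wide: closed under kernels, cokernels and extensions. -/
def Wide (C : Set (Modcat Λ)) : Prop :=
  ClosedUnderKernels C ∧ ClosedUnderCokernels C ∧ ClosedUnderExtensions C

/-- Torsion class: closed under quotients and extensions. -/
def TorsionClass (C : Set (Modcat Λ)) : Prop :=
  ClosedUnderQuotients C ∧ ClosedUnderExtensions C

/-- Vanishing of `Ext¹_Λ(X, Y)`. -/
def ext1IsZero (X Y : Modcat Λ) : Prop :=
  IsZero (((Ext ℤ (Modcat Λ) 1).obj (Opposite.op X)).obj Y)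

/-- A rigid module: `Ext¹_Λ(U, U) = 0`. -/
def Rigid (U : Modcat Λ) : Prop := ext1IsZero U U

/-- `X` is Ext-projective in `C`: `X ∈ C` and `Ext¹_Λ(X, C') = 0` for all `C' ∈ C`. -/
def ExtProjective (C : Set (Modcat Λ)) (X : Modcat Λ) : Prop :=
  X ∈ C ∧ ∀ Y ∈ C, ext1IsZero X Y

/-- `P(C)`: the class of Ext-projective objects of `C`. -/
def extProj (C : Set (Modcat Λ)) : Set (Modcat Λ) := { X | ExtProjective C X }

/-- `C` has enough Ext-projectives. -/
def HasEnoughExtProjectives (C : Set (Modcat Λ)) : Prop :=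
  ∀ X ∈ C, ∃ (Y P : Modcat Λ) (i : Y ⟶ P) (p : P ⟶ X),
    IsSES i p ∧ ExtProjective C P ∧ Y ∈ C

/-- `P` is an Ext-progenerator of `C`. -/
def IsExtProgenerator (C : Set (Modcat Λ)) (P : Modcat Λ) : Prop :=
  addOf P = extProj C ∧ HasEnoughExtProjectives C

/-- `P` is split projective in `C`: every surjection `C' ↠ P` with `C' ∈ C` splits. -/
def SplitProjective (C : Set (Modcat Λ)) (P : Modcat Λ) : Prop :=
  P ∈ C ∧ ∀ M ∈ C, ∀ f : M ⟶ P, Epi f → ∃ s : P ⟶ M, s ≫ f = 𝟙 P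

/-- A class `P` is Fac-minimal if there is no proper subcategory `P' ⊊ P` with `P ⊆ Fac P'`. -/
def FacMinimal (P : Set (Modcat Λ)) : Prop :=
  ¬ ∃ P' : Set (Modcat Λ), IsSubcat P' ∧ P' ⊂ P ∧ P ⊆ Fac P'

/-- `W(C) = {W ∈ C | ker φ ∈ C for every φ : C' → W with C' ∈ C}`. -/
def Wcat (C : Set (Modcat Λ)) : Set (Modcat Λ) :=
  { W | W ∈ C ∧ ∀ M ∈ C, ∀ φ : M ⟶ W, kernel φ ∈ C }

/-- An indecomposable module. -/
def Indec (M : Modcat Λ) : Prop :=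
  ¬ IsZero M ∧ ∀ N K : Modcat Λ, Nonempty (M ≅ N ⊞ K) → IsZero N ∨ IsZero K

/-- `Λ` is hereditary: every submodule of a projective module is projective. -/
def Hereditary (Λ : Type u) [Ring Λ] : Prop :=
  ∀ P : Modcat Λ, Module.Projective Λᵐᵒᵖ P →
    ∀ N : Submodule Λᵐᵒᵖ P, Module.Projective Λᵐᵒᵖ N

/-- `Λ` is representation-finite: only finitely many indecomposable finitely generated
modules up to isomorphism. -/
def RepFinite (Λ : Type u) [Ring Λ] : Prop :=
  ∃ L : List (Modcat Λ), ∀ M : Modcat Λ, Module.Finite Λᵐᵒᵖ M → Indec M →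
    ∃ N ∈ L, Nonempty (M ≅ N)

/-- Covariantly finite: every finitely generated module has a left `C`-approximation. -/
def CovariantlyFinite (C : Set (Modcat Λ)) : Prop :=
  ∀ M : Modcat Λ, Module.Finite Λᵐᵒᵖ M →
    ∃ (X : Modcat Λ) (_ : X ∈ C) (f : M ⟶ X),
      ∀ Y : Modcat Λ, Y ∈ C → ∀ g : M ⟶ Y, ∃ h : X ⟶ Y, f ≫ h = g

/-- Contravariantly finite: every finitely generated module has a right `C`-approximation. -/
def ContravariantlyFinite (C : Set (Modcat Λ)) : Prop :=
  ∀ M : Modcat Λ, Module.Finite Λᵐᵒᵖ M →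
    ∃ (X : Modcat Λ) (_ : X ∈ C) (f : X ⟶ M),
      ∀ Y : Modcat Λ, Y ∈ C → ∀ g : Y ⟶ M, ∃ h : Y ⟶ X, h ≫ f = g

/-- Functorially finite: both covariantly and contravariantly finite. -/
def FunctoriallyFinite (C : Set (Modcat Λ)) : Prop :=
  CovariantlyFinite C ∧ ContravariantlyFinite C

/-- The smallest wide subcategory of `mod Λ` containing `P`. -/
def wideClosure (P : Modcat Λ) : Set (Modcat Λ) :=
  ⋂₀ { W : Set (Modcat Λ) | IsSubcat W ∧ Wide W ∧ P ∈ W }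

/-- `A` is an artin algebra: an algebra over some commutative artinian ring `R`,
finitely generated as an `R`-module. -/
def IsArtinAlgebra (A : Type u) [Ring A] : Prop :=
  ∃ (R : Type u) (cr : CommRing R), letI := cr;
    IsArtinianRing R ∧ ∃ alg : Algebra R A, letI := alg; Module.Finite R A

/-- A tilting module over a ring `Γ`: rigid, projective dimension at most `1`, and
there is a short exact sequence `0 → Γ → T⁰ → T¹ → 0` with `T⁰, T¹ ∈ add T`. -/
def IsTiltingModule {Γ : Type u} [Ring Γ] (T : Modcat Γ) : Prop :=
  Rigid T ∧
  (∃ (P₁ P₀ : Modcat Γ) (i : P₁ ⟶ P₀) (p : P₀ ⟶ T),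
    Projective P₁ ∧ Projective P₀ ∧ IsSES i p) ∧
  (∃ (T₀ T₁ : Modcat Γ) (_ : T₀ ∈ addOf T) (_ : T₁ ∈ addOf T)
    (i : regular Γ ⟶ T₀) (p : T₀ ⟶ T₁), IsSES i p)

end Paper

open Paper

/-!
In each case, for `φ : C' ⟶ W` with `C' ∈ C` and `W` the new object, `ker φ` is identified with
the kernel of a map from an object of `C` into an object already known to lie in `W(C)`.
Kernels: a map into `ker f ⊆ M` has the same kernel as its composite into `M`.
Cokernels: pulling `φ : C' ⟶ cok f` back along `N ↠ cok f` gives an extension of `C'` by `im f`,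
hence an object of `C`, whose map to `N` has kernel `ker φ`.
Extensions: for `0 → X → Y → Z → 0`, the kernel `K` of `C' ⟶ Y ⟶ Z` lies in `C`, `φ` restricted
to `K` factors through `X`, and the kernel of that factorization is `ker φ`.
-/

section Abelian

universe v w
variable {𝒜 : Type v} [Category.{w} 𝒜] [Abelian 𝒜]

noncomputable def kernelPullbackSndIso {X Y S : 𝒜} (f : X ⟶ S) (g : Y ⟶ S) :
    kernel (pullback.snd f g) ≅ kernel f where
  hom := kernel.lift f (kernel.ι (pullback.snd f g) ≫ pullback.fst f g) (by
    rw [Category.assoc, pullback.condition, ← Category.assoc, kernel.condition, zero_comp])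
  inv := kernel.lift (pullback.snd f g)
      (pullback.lift (kernel.ι f) 0 (by simp)) (pullback.lift_snd _ _ _)
  hom_inv_id := by
    rw [← cancel_mono (kernel.ι (pullback.snd f g))]
    apply pullback.hom_ext <;> simp [pullback.lift_fst, pullback.lift_snd]
  inv_hom_id := by
    rw [← cancel_mono (kernel.ι f)]
    simp [pullback.lift_fst]

noncomputable def kernelPullbackFstIso {X Y S : 𝒜} (f : X ⟶ S) (g : Y ⟶ S) :
    kernel (pullback.fst f g) ≅ kernel g :=
  kernelIsoOfEq (pullbackSymmetry_hom_comp_snd f g).symm ≪≫ kernelIsIsoComp _ _ ≪≫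
    kernelPullbackSndIso g f

noncomputable def kernelRestrictIso {A B D : 𝒜} (φ : A ⟶ B) (g : B ⟶ D) :
    kernel (kernel.ι (φ ≫ g) ≫ φ) ≅ kernel φ where
  hom := kernel.lift φ (kernel.ι (kernel.ι (φ ≫ g) ≫ φ) ≫ kernel.ι (φ ≫ g)) (by
    rw [Category.assoc, kernel.condition])
  inv := kernel.lift (kernel.ι (φ ≫ g) ≫ φ)
      (kernel.lift (φ ≫ g) (kernel.ι φ) (by rw [← Category.assoc, kernel.condition, zero_comp]))
      (by rw [← Category.assoc, kernel.lift_ι, kernel.condition])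
  hom_inv_id := by
    rw [← cancel_mono (kernel.ι (kernel.ι (φ ≫ g) ≫ φ)), ← cancel_mono (kernel.ι (φ ≫ g))]
    simp
  inv_hom_id := by
    rw [← cancel_mono (kernel.ι φ)]
    simp

end Abelian

namespace Paper

variable {Λ : Type u} [Ring Λ] {C : Set (Modcat Λ)}

lemma isSES_kernel_ι {X Y : Modcat Λ} (p : X ⟶ Y) [Epi p] : IsSES (kernel.ι p) p :=
  ⟨kernel.condition p, { exact := ShortComplex.exact_of_f_is_kernel _ (kernelIsKernel p) }⟩

lemma closedUnderKernels_wcat (hC : IsSubcat C) : ClosedUnderKernels (Wcat C) := by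
  intro M N f hM hN
  refine ⟨hN.2 M hM.1 f, fun C' hC' φ => ?_⟩
  exact hC.isoClosed (kernelCompMono φ (kernel.ι f)) (hM.2 C' hC' (φ ≫ kernel.ι f))

lemma closedUnderCokernels_wcat (hC : IsSubcat C) (hIm : ClosedUnderImages C)
    (hCok : ClosedUnderCokernels C) (hExt : ClosedUnderExtensions C) :
    ClosedUnderCokernels (Wcat C) := by
  intro M N f hM hN
  refine ⟨hCok f hM.1 hN.1, fun C' hC' φ => ?_⟩
  let π := cokernel.π f
  have hkerπ : kernel π ∈ C := hC.isoClosed (Abelian.imageIsoImage f).symm (hIm f hM.1 hN.1)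
  have hpullback : pullback φ π ∈ C :=
    hExt _ _ (isSES_kernel_ι (pullback.fst φ π))
      (hC.isoClosed (kernelPullbackFstIso φ π).symm hkerπ) hC'
  exact hC.isoClosed (kernelPullbackSndIso φ π) (hN.2 _ hpullback (pullback.snd φ π))

lemma closedUnderExtensions_wcat (hC : IsSubcat C) (hExt : ClosedUnderExtensions C) :
    ClosedUnderExtensions (Wcat C) := by
  rintro X Y Z f g ⟨hfg, hses⟩ hX hZ
  refine ⟨hExt f g ⟨hfg, hses⟩ hX.1 hZ.1, fun C' hC' φ => ?_⟩
  have := hses.mono_f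
  let K := kernel (φ ≫ g)
  have hK : K ∈ C := hZ.2 C' hC' (φ ≫ g)
  let ψ : K ⟶ X := hses.exact.lift (kernel.ι (φ ≫ g) ≫ φ) (by simp)
  have hψ : ψ ≫ f = kernel.ι (φ ≫ g) ≫ φ := hses.exact.lift_f _ _
  exact hC.isoClosed ((kernelCompMono ψ f).symm ≪≫ kernelIsoOfEq hψ ≪≫ kernelRestrictIso φ g)
    (hX.2 K hK ψ)

end Paper

theorem stmt_8_general (Λ : Type u) [Ring Λ]
    (C : Set (Modcat Λ)) (hC : IsSubcat C) (hICE : ICEClosed C) :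
    Wide (Wcat C) :=
  let ⟨hIm, hCok, hExt⟩ := hICE
  ⟨closedUnderKernels_wcat hC, closedUnderCokernels_wcat hC hIm hCok hExt,
    closedUnderExtensions_wcat hC hExt⟩

theorem stmt_8 (R : Type u) [CommRing R] [IsArtinianRing R]
    (Λ : Type u) [Ring Λ] [Algebra R Λ] [Module.Finite R Λ]
    (C : Set (Modcat Λ)) (hC : IsSubcat C) (hICE : ICEClosed C) :
    Wide (Wcat C) :=
  stmt_8_general Λ C hC hICE
end

section
/- Let Λ be a hereditary artin algebra and C an extension-closed subcategory of mod Λ. Then Fac C, the subcategory of all quotients of objects of C, is closed under extensions; hence Fac C is a torsion class, and it is the smallest torsion class of mod Λ containing C. -/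
open CategoryTheory CategoryTheory.Limits

universe u

/-!
Let `0 → X → Y → Z → 0` be exact with `M₁ ↠ X` and `M₂ ↠ Z`, `M₁, M₂ ∈ C`. Present `M₂` as
`F / K` with `F` free; `K` is projective since `Λ` is hereditary. Lifting `F → M₂ → Z` through
`Y ↠ Z` gives `h : F → Y` sending `K` into `X`, and projectivity of `K` lifts `h|K` to
`s : K → M₁`. The pushout `E` of `M₁ ← K ↪ F` is an extension of `M₂` by `M₁`, hence lies in `C`,
and `(c, x) ↦ q₁ c + h x` maps `E` onto `Y`.
-/

section KerPushout

variable {A : Type*} [Ring A] {M₁ F M₂ Y : Type*}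
  [AddCommGroup M₁] [Module A M₁] [AddCommGroup F] [Module A F] [AddCommGroup M₂] [Module A M₂]
  [AddCommGroup Y] [Module A Y]

def kerPushoutRel (φ : F →ₗ[A] M₂) (s : LinearMap.ker φ →ₗ[A] M₁) : Submodule A (M₁ × F) :=
  LinearMap.range (s.prod (-(LinearMap.ker φ).subtype))

/-- The pushout of `M₁ ←s- ker φ ↪ F`, realised as `(M₁ × F) / {(s a, -a)}`. -/
abbrev KerPushout (φ : F →ₗ[A] M₂) (s : LinearMap.ker φ →ₗ[A] M₁) : Type _ :=
  (M₁ × F) ⧸ kerPushoutRel φ s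

namespace KerPushout

variable (φ : F →ₗ[A] M₂) (s : LinearMap.ker φ →ₗ[A] M₁)

def inl : M₁ →ₗ[A] KerPushout φ s := (kerPushoutRel φ s).mkQ ∘ₗ LinearMap.inl A M₁ F

def proj : KerPushout φ s →ₗ[A] M₂ :=
  (kerPushoutRel φ s).liftQ (φ ∘ₗ LinearMap.snd A M₁ F) (by rintro _ ⟨a, rfl⟩; simp)

def desc (g₁ : M₁ →ₗ[A] Y) (g₂ : F →ₗ[A] Y) (h : ∀ a, g₁ (s a) = g₂ a) :
    KerPushout φ s →ₗ[A] Y :=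
  (kerPushoutRel φ s).liftQ (g₁.coprod g₂) (by rintro _ ⟨a, rfl⟩; simp [h])

@[simp]
lemma desc_mk (g₁ : M₁ →ₗ[A] Y) (g₂ : F →ₗ[A] Y) (h : ∀ a, g₁ (s a) = g₂ a) (c : M₁) (x : F) :
    desc φ s g₁ g₂ h (Submodule.Quotient.mk (c, x)) = g₁ c + g₂ x := rfl

lemma inl_injective : Function.Injective (inl φ s) := by
  rw [← LinearMap.ker_eq_bot, LinearMap.ker_eq_bot']
  intro c hc
  obtain ⟨a, ha⟩ := (Submodule.Quotient.mk_eq_zero _).mp hc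
  obtain ⟨ha₁, ha₂⟩ := Prod.ext_iff.mp ha
  have ha₀ : a = 0 := by ext1; simpa using ha₂
  simpa [ha₀] using ha₁.symm

lemma proj_surjective (hφ : Function.Surjective φ) : Function.Surjective (proj φ s) := fun c ↦
  let ⟨x, hx⟩ := hφ c; ⟨Submodule.Quotient.mk (0, x), hx⟩

lemma range_inl : LinearMap.range (inl φ s) = LinearMap.ker (proj φ s) := by
  apply le_antisymm
  · rintro _ ⟨c, rfl⟩
    simp [inl, proj]
  · intro z hz
    obtain ⟨⟨c, x⟩, rfl⟩ := Submodule.mkQ_surjective _ z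
    have hx : x ∈ LinearMap.ker φ := hz
    refine ⟨c + s ⟨x, hx⟩, (Submodule.Quotient.eq _).mpr ⟨⟨x, hx⟩, ?_⟩⟩
    simp

end KerPushout

theorem exists_surjective_kerPushout {X Z : Type*} [AddCommGroup X] [Module A X]
    [AddCommGroup Z] [Module A Z] {f : X →ₗ[A] Y} {g : Y →ₗ[A] Z}
    (hfg : LinearMap.range f = LinearMap.ker g) (hg : Function.Surjective g)
    {q₁ : M₁ →ₗ[A] X} (hq₁ : Function.Surjective q₁)
    {q₂ : M₂ →ₗ[A] Z} (hq₂ : Function.Surjective q₂)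
    {φ : F →ₗ[A] M₂} (hφ : Function.Surjective φ)
    [Module.Projective A F] [Module.Projective A (LinearMap.ker φ)] :
    ∃ (s : LinearMap.ker φ →ₗ[A] M₁) (ψ : KerPushout φ s →ₗ[A] Y), Function.Surjective ψ := by
  obtain ⟨h, hh⟩ := Module.projective_lifting_property g (q₂ ∘ₗ φ) hg
  have h_ker (a : LinearMap.ker φ) : h a ∈ LinearMap.range f := by
    rw [hfg, LinearMap.mem_ker, ← LinearMap.comp_apply, hh]
    simp
  obtain ⟨s, hs⟩ := Module.projective_lifting_property (f.rangeRestrict ∘ₗ q₁)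
    ((h ∘ₗ (LinearMap.ker φ).subtype).codRestrict _ h_ker)
    (f.surjective_rangeRestrict.comp hq₁)
  have hs' (a : LinearMap.ker φ) : f (q₁ (s a)) = h a :=
    congr_arg Subtype.val (LinearMap.congr_fun hs a)
  refine ⟨s, KerPushout.desc φ s (f ∘ₗ q₁) h hs', fun y ↦ ?_⟩
  obtain ⟨x, hx⟩ := (hq₂.comp hφ) (g y)
  obtain ⟨x₀, hx₀⟩ : y - h x ∈ LinearMap.range f := by
    rw [hfg, LinearMap.mem_ker, map_sub, ← LinearMap.comp_apply g, hh]
    simp [← hx]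
  obtain ⟨c, rfl⟩ := hq₁ x₀
  exact ⟨Submodule.Quotient.mk (c, x), by simp [hx₀]⟩

end KerPushout

namespace Paper

variable {Λ : Type u} [Ring Λ]

lemma isSES_of_range_eq_ker {X Y Z : Modcat Λ} {f : X ⟶ Y} {g : Y ⟶ Z}
    (hf : Function.Injective f) (hg : Function.Surjective g)
    (hfg : LinearMap.range f.hom = LinearMap.ker g.hom) : IsSES f g := by
  have hfg_zero : f ≫ g = 0 := by
    ext x
    have hx : f.hom x ∈ LinearMap.ker g.hom := hfg ▸ LinearMap.mem_range_self f.hom x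
    simpa using hx
  exact ⟨hfg_zero,
    { exact := (ShortComplex.moduleCat_exact_iff_range_eq_ker _).mpr hfg
      mono_f := (ModuleCat.mono_iff_injective f).mpr hf
      epi_g := (ModuleCat.epi_iff_surjective g).mpr hg }⟩

lemma IsSES.range_eq_ker {X Y Z : Modcat Λ} {f : X ⟶ Y} {g : Y ⟶ Z} (h : IsSES f g) :
    LinearMap.range f.hom = LinearMap.ker g.hom :=
  (ShortComplex.moduleCat_exact_iff_range_eq_ker _).mp h.2.exact

lemma IsSES.surjective {X Y Z : Modcat Λ} {f : X ⟶ Y} {g : Y ⟶ Z} (h : IsSES f g) :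
    Function.Surjective g :=
  (ModuleCat.epi_iff_surjective g).mp h.2.epi_g

lemma subset_fac (C : Set (Modcat Λ)) : C ⊆ Fac C :=
  fun M hM ↦ ⟨M, hM, 𝟙 M, inferInstance⟩

lemma closedUnderQuotients_fac (C : Set (Modcat Λ)) : ClosedUnderQuotients (Fac C) := by
  rintro M N f hf ⟨M₀, hM₀, q, hq⟩
  exact ⟨M₀, hM₀, q ≫ f, epi_comp q f⟩

lemma fac_subset {C T : Set (Modcat Λ)} (hT : ClosedUnderQuotients T) (hCT : C ⊆ T) :
    Fac C ⊆ T := by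
  rintro M ⟨M₀, hM₀, q, hq⟩
  exact hT q hq (hCT hM₀)

theorem closedUnderExtensions_fac (hΛ : Hereditary Λ) {C : Set (Modcat Λ)}
    (hext : ClosedUnderExtensions C) : ClosedUnderExtensions (Fac C) := by
  rintro X Y Z f g hses ⟨M₁, hM₁, q₁, hq₁⟩ ⟨M₂, hM₂, q₂, hq₂⟩
  let φ := Finsupp.linearCombination Λᵐᵒᵖ (id : M₂ → M₂)
  have hφ : Function.Surjective φ := Finsupp.linearCombination_id_surjective Λᵐᵒᵖ M₂
  have : Module.Projective Λᵐᵒᵖ (LinearMap.ker φ) :=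
    hΛ (ModuleCat.of Λᵐᵒᵖ (M₂ →₀ Λᵐᵒᵖ)) inferInstance _
  obtain ⟨s, ψ, hψ⟩ := exists_surjective_kerPushout hses.range_eq_ker hses.surjective
    ((ModuleCat.epi_iff_surjective q₁).mp hq₁) ((ModuleCat.epi_iff_surjective q₂).mp hq₂) hφ
  have hE : ModuleCat.of Λᵐᵒᵖ (KerPushout φ s) ∈ C :=
    hext (ModuleCat.ofHom (KerPushout.inl φ s)) (ModuleCat.ofHom (KerPushout.proj φ s))
      (isSES_of_range_eq_ker (KerPushout.inl_injective φ s) (KerPushout.proj_surjective φ s hφ)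
        (KerPushout.range_inl φ s)) hM₁ hM₂
  exact ⟨_, hE, ModuleCat.ofHom ψ, (ModuleCat.epi_iff_surjective _).mpr hψ⟩

end Paper

open Paper

theorem stmt_9_general
    (Λ : Type u) [Ring Λ]
    (hΗ : Hereditary Λ)
    (C : Set (Modcat Λ)) (hext : ClosedUnderExtensions C) :
    ClosedUnderExtensions (Fac C) ∧ TorsionClass (Fac C) ∧ C ⊆ Fac C ∧
      (∀ T : Set (Modcat Λ), TorsionClass T → C ⊆ T → Fac C ⊆ T) := by
  have hfac := closedUnderExtensions_fac hΗ hext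
  exact ⟨hfac, ⟨closedUnderQuotients_fac C, hfac⟩, subset_fac C,
    fun _ hT hCT ↦ fac_subset hT.1 hCT⟩

theorem stmt_9 (R : Type u) [CommRing R] [IsArtinianRing R]
    (Λ : Type u) [Ring Λ] [Algebra R Λ] [Module.Finite R Λ]
    (hΗ : Hereditary Λ)
    (C : Set (Modcat Λ)) (hC : IsSubcat C) (hext : ClosedUnderExtensions C) :
    ClosedUnderExtensions (Fac C) ∧ TorsionClass (Fac C) ∧ C ⊆ Fac C ∧
      (∀ T : Set (Modcat Λ), TorsionClass T → C ⊆ T → Fac C ⊆ T) :=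
  stmt_9_general Λ hΗ C hext
end

section
/- Let Λ be a hereditary artin algebra and C an ICE-closed subcategory of mod Λ with enough Ext-projectives. Let P be a split projective object of C and Q a submodule of P with Q ∈ C. Then Q is also split projective in C. -/
open CategoryTheory CategoryTheory.Limits

universe u

open Paper

/-! Let `f : M ↠ Q` with `M ∈ C`. Since `Λ` is hereditary, the extension `0 → Q → P → P/Q → 0`
lifts along `f` to an extension `0 → M → N → P/Q → 0`: take a free module `F ↠ P`, lift the
projective `G = p⁻¹(Q) → Q` through `f`, and push `G ⊆ F` out along the lift. Then `N ∈ C` by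
closure under cokernels and extensions, the epimorphism `N ↠ P` splits because `P` is split
projective, and the splitting maps `Q` into `M`, where it is a section of `f`. -/

namespace Paper

section Pushout

variable {A F M P : Type*} [Ring A] [AddCommGroup F] [Module A F] [AddCommGroup M] [Module A M]
  [AddCommGroup P] [Module A P] {p : F →ₗ[A] P} {φ : M →ₗ[A] P}

theorem exists_lift_of_projective_comap [Module.Projective A ((LinearMap.range φ).comap p)] :
    ∃ h : (LinearMap.range φ).comap p →ₗ[A] M, ∀ g, φ (h g) = p g := by
  obtain ⟨h, hh⟩ := Module.projective_lifting_property φ.rangeRestrict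
    (p.restrict (p := (LinearMap.range φ).comap p) (q := LinearMap.range φ) fun _ hx => hx)
    φ.surjective_rangeRestrict
  exact ⟨h, fun g => congrArg Subtype.val (LinearMap.congr_fun hh g)⟩

variable (h : (LinearMap.range φ).comap p →ₗ[A] M)

-- The pushout of `p⁻¹(im φ) ⊆ F` along `h` is `(F × M) ⧸ pushoutRel h`.
def pushoutRel : Submodule A (F × M) :=
  LinearMap.range (((LinearMap.range φ).comap p).subtype.prod (-h))

def pushoutInr : M →ₗ[A] (F × M) ⧸ pushoutRel h :=
  (pushoutRel h).mkQ ∘ₗ LinearMap.inr A F M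

variable {h} (hh : ∀ g, φ (h g) = p g)

def pushoutDesc : (F × M) ⧸ pushoutRel h →ₗ[A] P :=
  (pushoutRel h).liftQ (p.coprod φ) <| by
    rintro _ ⟨g, rfl⟩
    simp [hh]

theorem pushoutDesc_mk (x : F) (m : M) :
    pushoutDesc hh (Submodule.Quotient.mk (x, m)) = p x + φ m := rfl

theorem pushoutDesc_inr (m : M) : pushoutDesc hh (pushoutInr h m) = φ m := by
  simp [pushoutInr, pushoutDesc_mk]

theorem pushoutInr_injective : Function.Injective (pushoutInr h) := by
  rw [← LinearMap.ker_eq_bot, LinearMap.ker_eq_bot']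
  intro m hm
  obtain ⟨g, hg⟩ := (Submodule.Quotient.mk_eq_zero _).mp hm
  obtain rfl : g = 0 := Subtype.ext (congrArg Prod.fst hg)
  simpa using (congrArg Prod.snd hg).symm

theorem pushoutDesc_surjective (hp : Function.Surjective p) :
    Function.Surjective (pushoutDesc hh) := fun y =>
  let ⟨x, hx⟩ := hp y
  ⟨Submodule.Quotient.mk (x, 0), by simp [pushoutDesc_mk, hx]⟩

theorem mem_range_pushoutInr {n} (hn : pushoutDesc hh n ∈ LinearMap.range φ) :
    n ∈ LinearMap.range (pushoutInr h) := by
  obtain ⟨⟨x, m⟩, rfl⟩ := Submodule.Quotient.mk_surjective _ n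
  have hx : x ∈ (LinearMap.range φ).comap p := by
    simpa [pushoutDesc_mk] using Submodule.sub_mem _ hn (LinearMap.mem_range_self φ m)
  refine ⟨m + h ⟨x, hx⟩, (Submodule.Quotient.eq _).mpr ⟨-⟨x, hx⟩, ?_⟩⟩
  simp

end Pushout

theorem Hereditary.exists_isSES_factorization {Λ : Type u} [Ring Λ] (hΗ : Hereditary Λ)
    {M P : Modcat Λ} (φ : M ⟶ P) :
    ∃ (N : Modcat Λ) (μ : M ⟶ N) (π : N ⟶ P),
      IsSES μ (π ≫ ModuleCat.ofHom (LinearMap.range φ.hom).mkQ) ∧ Epi π ∧ μ ≫ π = φ := by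
  let p := Finsupp.linearCombination Λᵐᵒᵖ (id : P → P)
  have : Module.Projective Λᵐᵒᵖ ((LinearMap.range φ.hom).comap p) :=
    hΗ (ModuleCat.of Λᵐᵒᵖ (P →₀ Λᵐᵒᵖ)) inferInstance _
  obtain ⟨h, hh⟩ := exists_lift_of_projective_comap (p := p) (φ := φ.hom)
  have hπ := pushoutDesc_surjective hh (Finsupp.linearCombination_id_surjective Λᵐᵒᵖ P)
  refine ⟨ModuleCat.of _ (_ ⧸ pushoutRel h), ModuleCat.ofHom (pushoutInr h),
    ModuleCat.ofHom (pushoutDesc hh), ⟨?_, ?_⟩, (ModuleCat.epi_iff_surjective _).mpr hπ, ?_⟩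
  · ext m
    simp [pushoutDesc_inr]
  · exact
      { exact := (ShortComplex.moduleCat_exact_iff _).mpr fun n hn =>
          mem_range_pushoutInr hh (by simpa using hn)
        mono_f := (ModuleCat.mono_iff_injective _).mpr pushoutInr_injective
        epi_g := (ModuleCat.epi_iff_surjective _).mpr ((Submodule.mkQ_surjective _).comp hπ) }
  · ext m
    exact pushoutDesc_inr hh m

end Paper

namespace CategoryTheory.ShortComplex.Exact

variable {𝒜 : Type*} [Category 𝒜] [Preadditive 𝒜] [Balanced 𝒜]

theorem exists_section_of_section {S : ShortComplex 𝒜} (hS : S.Exact) [Mono S.f]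
    {Q P : 𝒜} {f : S.X₁ ⟶ Q} {i : Q ⟶ P} [Mono i] {π : S.X₂ ⟶ P} {t : P ⟶ S.X₂}
    (hπ : S.f ≫ π = f ≫ i) (ht : t ≫ π = 𝟙 P) (hit : i ≫ t ≫ S.g = 0) :
    ∃ s : Q ⟶ S.X₁, s ≫ f = 𝟙 Q := by
  refine ⟨hS.lift (i ≫ t) (by rw [Category.assoc, hit]), ?_⟩
  rw [← cancel_mono i, Category.assoc, ← hπ, hS.lift_f_assoc, Category.assoc, ht,
    Category.comp_id, Category.id_comp]

end CategoryTheory.ShortComplex.Exact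

theorem stmt_13_general
    (Λ : Type u) [Ring Λ]
    (hΗ : Hereditary Λ)
    (C : Set (Modcat Λ)) (hC : IsSubcat C) (hICE : ICEClosed C)
    (P Q : Modcat Λ) (hP : SplitProjective C P)
    (i : Q ⟶ P) (hi : Mono i) (hQ : Q ∈ C) :
    SplitProjective C Q := by
  obtain ⟨-, hcok, hext⟩ := hICE
  refine ⟨hQ, fun M hM f hf => ?_⟩
  obtain ⟨N, μ, π, ⟨w, hses⟩, hπ, hμπ⟩ := hΗ.exists_isSES_factorization (f ≫ i)
  have hZ : ModuleCat.of Λᵐᵒᵖ (P ⧸ LinearMap.range (f ≫ i).hom) ∈ C :=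
    hC.isoClosed (ModuleCat.cokernelIsoRangeQuotient _) (hcok _ hM hP.1)
  obtain ⟨t, ht⟩ := hP.2 N (hext μ _ ⟨w, hses⟩ hM hZ) π hπ
  have := hses.mono_f
  refine hses.exact.exists_section_of_section (S := ShortComplex.mk μ _ w) hμπ ht ?_
  rw [reassoc_of% ht]
  ext q
  obtain ⟨m, rfl⟩ := (ModuleCat.epi_iff_surjective f).mp hf q
  simp

theorem stmt_13 (R : Type u) [CommRing R] [IsArtinianRing R]
    (Λ : Type u) [Ring Λ] [Algebra R Λ] [Module.Finite R Λ]
    (hΗ : Hereditary Λ)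
    (C : Set (Modcat Λ)) (hC : IsSubcat C) (hICE : ICEClosed C)
    (henough : HasEnoughExtProjectives C)
    (P Q : Modcat Λ) (hP : SplitProjective C P)
    (i : Q ⟶ P) (hi : Mono i) (hQ : Q ∈ C) :
    SplitProjective C Q :=
  stmt_13_general Λ hΗ C hC hICE P Q hP i hi hQ
end
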